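/- arXiv:2101.12747 — 2 statements merged into one kernel-verified Lean document; each statement's English description precedes it below -/
import Mathlib

section
/- Let u be a nonempty finite binary word with length ℓ and height h, and set Φ(u) := −φ(u)/3^h ∈ ℤ₂. Then for every x ∈ ℤ₂ one has T^ℓ(Φ(u) + (2^ℓ/3^h)·x) = x. -/
/-!
Both branches of `T` are inverted by affine maps: `T (2 * y') = y'`, and `T y = y'` whenever
`3 * y + 1 = 2 * y'`, the parity of `y` being forced by that equation. Prepending a letter `b`
to a word `v` gives `φ(b v) = 2 φ(v) + b 3^{h(v)}`, so if `3^{h(b v)} y = -φ(b v) + 2^{ℓ(b v)} x`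
and `3^{h(v)} y' = -φ(v) + 2^{ℓ(v)} x`, then `y = 2 y'` for `b = 0` and `3 y + 1 = 2 y'` for
`b = 1`. Hence `T y = y'`, and induction on the word finishes, `3` being a unit of `ℤ₂`.
-/

def wordHeight (u : List Bool) : ℕ := u.count true

def phiAux : List Bool → ℕ
  | [] => 0
  | b :: r => if b then 3 * phiAux r + 2 ^ r.length else phiAux r

def phi (u : List Bool) : ℕ := phiAux u.reverse

lemma wordHeight_cons (b : Bool) (v : List Bool) :
    wordHeight (b :: v) = wordHeight v + if b then 1 else 0 := by
  cases b <;> simp [wordHeight]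

lemma phiAux_append_singleton (l : List Bool) (b : Bool) :
    phiAux (l ++ [b]) = 2 * phiAux l + if b then 3 ^ l.count true else 0 := by
  induction l with
  | nil => cases b <;> simp [phiAux]
  | cons c r ih => cases c <;> cases b <;> simp [phiAux, ih, pow_succ] <;> ring

lemma phi_cons (b : Bool) (v : List Bool) :
    phi (b :: v) = 2 * phi v + if b then 3 ^ wordHeight v else 0 := by
  simp [phi, wordHeight, phiAux_append_singleton, List.count_reverse]

lemma PadicInt.isUnit_three : IsUnit (3 : ℤ_[2]) := by
  by_contra h
  have h3 : ‖((3 : ℤ) : ℤ_[2])‖ < 1 := by exact_mod_cast PadicInt.not_isUnit_iff.1 h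
  have := (PadicInt.norm_int_lt_one_iff_dvd 3).1 h3
  norm_num at this

def IsCollatzMap (T : ℤ_[2] → ℤ_[2]) : Prop :=
  ∀ x : ℤ_[2], 2 * T x = if PadicInt.toZMod x = 1 then 3 * x + 1 else x

namespace IsCollatzMap

variable {T : ℤ_[2] → ℤ_[2]}

lemma apply_two_mul (hT : IsCollatzMap T) (y : ℤ_[2]) : T (2 * y) = y := by
  have heven : PadicInt.toZMod (2 * y) ≠ 1 := by
    rw [map_mul, map_ofNat, show (2 : ZMod 2) = 0 from rfl, zero_mul]
    decide
  have h := hT (2 * y)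
  rw [if_neg heven] at h
  exact mul_left_cancel₀ two_ne_zero h

lemma apply_eq_of_three_mul_add_one_eq (hT : IsCollatzMap T) {y y' : ℤ_[2]}
    (hy : 3 * y + 1 = 2 * y') : T y = y' := by
  have hodd : PadicInt.toZMod y = 1 := by
    have h := congrArg PadicInt.toZMod hy
    simp only [map_add, map_mul, map_ofNat, map_one] at h
    generalize PadicInt.toZMod y = a at h
    generalize PadicInt.toZMod y' = b at h
    revert a b
    decide
  have h := hT y
  rw [if_pos hodd, hy] at h
  exact mul_left_cancel₀ two_ne_zero h

lemma iterate_length_eq_of_three_pow_mul_eq (hT : IsCollatzMap T) (u : List Bool)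
    {x y : ℤ_[2]} (hy : 3 ^ wordHeight u * y = -(phi u : ℤ_[2]) + 2 ^ u.length * x) :
    T^[u.length] y = x := by
  induction u generalizing y with
  | nil => simpa [phi, phiAux, wordHeight] using hy
  | cons b v ih =>
    set y' := Ring.inverse ((3 : ℤ_[2]) ^ wordHeight v) * (-(phi v : ℤ_[2]) + 2 ^ v.length * x)
    have hy' : 3 ^ wordHeight v * y' = -(phi v : ℤ_[2]) + 2 ^ v.length * x :=
      Ring.mul_inverse_cancel_left _ _ (PadicInt.isUnit_three.pow _)
    suffices T y = y' by
      rw [List.length_cons, Function.iterate_succ_apply, this]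
      exact ih hy'
    have h3 : (3 : ℤ_[2]) ^ wordHeight v ≠ 0 := (PadicInt.isUnit_three.pow _).ne_zero
    cases b with
    | false =>
      simp only [phi_cons, wordHeight_cons, List.length_cons, Bool.false_eq_true, if_false] at hy
      push_cast at hy
      have hy2 : y = 2 * y' := mul_left_cancel₀ h3 (by linear_combination hy - 2 * hy')
      rw [hy2, hT.apply_two_mul]
    | true =>
      simp only [phi_cons, wordHeight_cons, List.length_cons, if_true] at hy
      push_cast at hy
      exact hT.apply_eq_of_three_mul_add_one_eq
        (mul_left_cancel₀ h3 (by linear_combination hy - 2 * hy'))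

end IsCollatzMap

theorem stmt4_general (T : ℤ_[2] → ℤ_[2])
    (hT : ∀ x : ℤ_[2], 2 * T x = if PadicInt.toZMod x = 1 then 3 * x + 1 else x)
    (u : List Bool) (x : ℤ_[2]) :
    T^[u.length]
        (-(phi u : ℤ_[2]) * Ring.inverse ((3 : ℤ_[2]) ^ wordHeight u) +
          (2 : ℤ_[2]) ^ u.length * Ring.inverse ((3 : ℤ_[2]) ^ wordHeight u) * x) = x :=
  IsCollatzMap.iterate_length_eq_of_three_pow_mul_eq hT u <| by
    linear_combination (-(phi u : ℤ_[2]) + 2 ^ u.length * x) *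
      Ring.mul_inverse_cancel _ (PadicInt.isUnit_three.pow (wordHeight u))

/-- If `T` is the 3x+1 map on `ℤ₂`, `u` is a nonempty finite binary word of
length `ℓ` and height `h`, and `Φ(u) = −φ(u)/3^h ∈ ℤ₂`, then for every
`x ∈ ℤ₂` one has `T^ℓ(Φ(u) + (2^ℓ/3^h)·x) = x`. -/
theorem stmt4 (T : ℤ_[2] → ℤ_[2])
    (hT : ∀ x : ℤ_[2], 2 * T x = if PadicInt.toZMod x = 1 then 3 * x + 1 else x)
    (u : List Bool) (hu : u ≠ []) (x : ℤ_[2]) :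
    T^[u.length]
        (-(phi u : ℤ_[2]) * Ring.inverse ((3 : ℤ_[2]) ^ wordHeight u) +
          (2 : ℤ_[2]) ^ u.length * Ring.inverse ((3 : ℤ_[2]) ^ wordHeight u) * x) = x :=
  stmt4_general T hT u x
end

section
/- Let x ∈ ℤ₂, let ℓ ≥ 1, let u be the prefix of length ℓ of the parity vector of x, and let h be the height of u. Then T^ℓ(x) = x if and only if x = φ(u)·(2^ℓ − 3^h)^{−1} in ℤ₂ (the integer 2^ℓ − 3^h is odd, hence a unit in ℤ₂). -/
/-- The prefix of length `ℓ` of the parity vector of `x ∈ ℤ₂` under the map `T`: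
its `k`-th digit is `T^k(x) mod 2`. -/
noncomputable def parityPrefix (T : ℤ_[2] → ℤ_[2]) (x : ℤ_[2]) (ℓ : ℕ) : List Bool :=
  (List.range ℓ).map fun k => decide (PadicInt.toZMod (T^[k] x) = 1)

lemma phi_append_singleton (u : List Bool) (b : Bool) :
    phi (u ++ [b]) = if b then 3 * phi u + 2 ^ u.length else phi u := by
  simp [phi, phiAux, List.reverse_append]

lemma parityPrefix_succ (T : ℤ_[2] → ℤ_[2]) (x : ℤ_[2]) (n : ℕ) :
    parityPrefix T x (n + 1)
      = parityPrefix T x n ++ [decide (PadicInt.toZMod (T^[n] x) = 1)] := by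
  simp [parityPrefix, List.range_succ]

lemma length_parityPrefix (T : ℤ_[2] → ℤ_[2]) (x : ℤ_[2]) (n : ℕ) :
    (parityPrefix T x n).length = n := by
  simp [parityPrefix]

lemma wordHeight_append_singleton (u : List Bool) (b : Bool) :
    wordHeight (u ++ [b]) = wordHeight u + if b then 1 else 0 := by
  cases b <;> simp [wordHeight, List.count_append]

lemma two_pow_mul_iterate (T : ℤ_[2] → ℤ_[2])
    (hT : ∀ x : ℤ_[2], 2 * T x = if PadicInt.toZMod x = 1 then 3 * x + 1 else x)
    (x : ℤ_[2]) (ℓ : ℕ) :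
    2 ^ ℓ * T^[ℓ] x
      = 3 ^ wordHeight (parityPrefix T x ℓ) * x + (phi (parityPrefix T x ℓ) : ℤ_[2]) := by
  induction ℓ with
  | zero => simp [parityPrefix, wordHeight, phi, phiAux]
  | succ n ih =>
    have hstep : 2 ^ (n + 1) * T^[n + 1] x = 2 ^ n * (2 * T (T^[n] x)) := by
      rw [Function.iterate_succ_apply', pow_succ, mul_assoc]
    rw [hstep, hT, parityPrefix_succ, phi_append_singleton, wordHeight_append_singleton,
      length_parityPrefix]
    by_cases hodd : PadicInt.toZMod (T^[n] x) = 1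
    · simp only [hodd, decide_true, if_true, pow_succ, Nat.cast_add, Nat.cast_mul, Nat.cast_pow,
        Nat.cast_ofNat]
      linear_combination 3 * ih
    · simpa [hodd] using ih

lemma PadicInt.isUnit_of_toZMod_ne_zero {p : ℕ} [Fact p.Prime] {z : ℤ_[p]}
    (hz : PadicInt.toZMod z ≠ 0) : IsUnit z := by
  by_contra hunit
  have hmem : z ∈ RingHom.ker PadicInt.toZMod := by
    rw [PadicInt.ker_toZMod]
    exact hunit
  exact hz hmem

lemma isUnit_two_pow_sub_three_pow {ℓ : ℕ} (hℓ : ℓ ≠ 0) (h : ℕ) :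
    IsUnit ((2 : ℤ_[2]) ^ ℓ - 3 ^ h) := by
  apply PadicInt.isUnit_of_toZMod_ne_zero
  have h2 : (2 : ZMod 2) = 0 := rfl
  have h3 : (3 : ZMod 2) = 1 := rfl
  rw [map_sub, map_pow, map_pow, map_ofNat, map_ofNat, h2, h3, zero_pow hℓ, one_pow]
  decide

/-- If `T` is the 3x+1 map on `ℤ₂`, `x ∈ ℤ₂`, `ℓ ≥ 1`, `u` is the length-`ℓ`
prefix of the parity vector of `x` and `h` its height, then `T^ℓ(x) = x` if and
only if `x = φ(u)·(2^ℓ − 3^h)⁻¹` (the element `2^ℓ − 3^h` is odd, hence a unit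
in `ℤ₂`, and its inverse is `Ring.inverse (2^ℓ − 3^h)`). -/
theorem stmt6 (T : ℤ_[2] → ℤ_[2])
    (hT : ∀ x : ℤ_[2], 2 * T x = if PadicInt.toZMod x = 1 then 3 * x + 1 else x)
    (x : ℤ_[2]) (ℓ : ℕ) (hℓ : 1 ≤ ℓ) :
    T^[ℓ] x = x ↔
      x = (phi (parityPrefix T x ℓ) : ℤ_[2]) *
        Ring.inverse ((2 : ℤ_[2]) ^ ℓ - (3 : ℤ_[2]) ^ wordHeight (parityPrefix T x ℓ)) := by
  set u := parityPrefix T x ℓ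
  have hiter := two_pow_mul_iterate T hT x ℓ
  have hunit := isUnit_two_pow_sub_three_pow (by omega : ℓ ≠ 0) (wordHeight u)
  calc T^[ℓ] x = x ↔ 2 ^ ℓ * T^[ℓ] x = 2 ^ ℓ * x :=
        (mul_right_inj' (pow_ne_zero ℓ two_ne_zero)).symm
    _ ↔ x * (2 ^ ℓ - 3 ^ wordHeight u) = phi u := by
        rw [hiter]
        constructor <;> intro h <;> linear_combination -h
    _ ↔ _ := (Ring.eq_mul_inverse_iff_mul_eq _ _ _ hunit).symm
end
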